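/- arXiv:0910.0904 — 3 statements merged into one kernel-verified Lean document; each statement's English description precedes it below -/
import Mathlib

section
/- Let a, b, c, d, e ∈ ℂ and let (u, v) ∈ ℂ² with (u, v) ≠ (0, 0). Then the set of points (x, y) ∈ ℂ² satisfying both y² + a·x·y + b·y = x³ + c·x² + d·x + e and (y+v)² + a·(x+u)·(y+v) + b·(y+v) = (x+u)³ + c·(x+u)² + d·(x+u) + e has at most 4 elements. (In other words, a Weierstrass cubic over ℂ and a nontrivial translate of it intersect in at most 4 affine points.) -/
open Polynomial

private lemma exists_sq (z : ℂ) : ∃ w : ℂ, w ^ 2 = z :=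
  IsAlgClosed.exists_pow_nat_eq z two_pos

private lemma roots_toFinset_card_le {P : ℂ[X]} {n : ℕ} (h : P.natDegree ≤ n) :
    P.roots.toFinset.card ≤ n :=
  ((Multiset.toFinset_card_le _).trans (Polynomial.card_roots' P)).trans h

/-- A Weierstrass cubic over ℂ and a nontrivial translate of it intersect
in at most 4 affine points. -/
theorem weierstrass_translate_intersection_complex
    (a b c d e u v : ℂ) (huv : (u, v) ≠ (0, 0)) :
    {p : ℂ × ℂ |
        p.2 ^ 2 + a * p.1 * p.2 + b * p.2 =
          p.1 ^ 3 + c * p.1 ^ 2 + d * p.1 + e ∧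
        (p.2 + v) ^ 2 + a * (p.1 + u) * (p.2 + v) + b * (p.2 + v) =
          (p.1 + u) ^ 3 + c * (p.1 + u) ^ 2 + d * (p.1 + u) + e}.Finite ∧
    {p : ℂ × ℂ |
        p.2 ^ 2 + a * p.1 * p.2 + b * p.2 =
          p.1 ^ 3 + c * p.1 ^ 2 + d * p.1 + e ∧
        (p.2 + v) ^ 2 + a * (p.1 + u) * (p.2 + v) + b * (p.2 + v) =
          (p.1 + u) ^ 3 + c * (p.1 + u) ^ 2 + d * (p.1 + u) + e}.ncard ≤ 4 := by
  classical
  set S : Set (ℂ × ℂ) := {p : ℂ × ℂ |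
        p.2 ^ 2 + a * p.1 * p.2 + b * p.2 =
          p.1 ^ 3 + c * p.1 ^ 2 + d * p.1 + e ∧
        (p.2 + v) ^ 2 + a * (p.1 + u) * (p.2 + v) + b * (p.2 + v) =
          (p.1 + u) ^ 3 + c * (p.1 + u) ^ 2 + d * (p.1 + u) + e} with hS
  obtain ⟨T, hsub, hcard⟩ : ∃ T : Finset (ℂ × ℂ), S ⊆ ↑T ∧ T.card ≤ 4 := by
    by_cases hw0 : 2*v + a*u = 0
    · -- case B: the "linear in y" coefficient vanishes, so u ≠ 0
      have hu : u ≠ 0 := by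
        intro h
        apply huv
        have hv : v = 0 := by rw [h] at hw0; linear_combination hw0 / 2
        simp [h, hv]
      -- quadratic satisfied by x
      set Q : ℂ[X] := C (u^3 + c*u^2 + d*u - v^2 - a*u*v - b*v)
          + C (3*u^2 + 2*c*u - a*v) * X + C (3*u) * X^2 with hQ
      have hQ2 : Q.coeff 2 = 3*u := by
        simp only [hQ, coeff_add, coeff_C_mul, coeff_X, coeff_X_pow, coeff_C]
        norm_num
      have hQ0 : Q ≠ 0 := by
        intro h
        apply hu
        have h3 : (3:ℂ)*u = 0 := by rw [← hQ2, h]; simp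
        have : (3:ℂ) ≠ 0 := by norm_num
        exact (mul_eq_zero.1 h3).resolve_left this
      have hQd : Q.natDegree ≤ 2 := by rw [hQ]; compute_degree
      -- square root function for the y-quadratic discriminant
      set r : ℂ → ℂ := fun x =>
        Classical.choose (exists_sq ((a*x+b)^2 + 4*(x^3 + c*x^2 + d*x + e))) with hr
      have hrs : ∀ x : ℂ, (r x)^2 = (a*x+b)^2 + 4*(x^3 + c*x^2 + d*x + e) :=
        fun x => Classical.choose_spec (exists_sq _)
      set F : ℂ × Bool → ℂ × ℂ := fun q =>
        (q.1, (-(a*q.1+b) + (if q.2 then r q.1 else - r q.1))/2) with hF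
      refine ⟨(Q.roots.toFinset ×ˢ (Finset.univ : Finset Bool)).image F, ?_, ?_⟩
      · rintro ⟨x, y⟩ ⟨h1, h2⟩
        simp only [Finset.coe_image, Set.mem_image, Finset.mem_coe, Finset.mem_product,
          Multiset.mem_toFinset, mem_roots hQ0, Finset.mem_univ, and_true]
        have hxroot : Q.IsRoot x := by
          simp only [IsRoot, hQ, eval_add, eval_mul, eval_C, eval_X, eval_pow]
          linear_combination h1 - h2 + y * hw0
        have hsplit : (y - (-(a*x+b) + r x)/2) * (y - (-(a*x+b) - r x)/2) = 0 := by
          linear_combination h1 - (hrs x) / 4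
        rcases mul_eq_zero.1 hsplit with hy | hy
        · exact ⟨(x, true), hxroot, by simp [hF]; linear_combination -hy⟩
        · exact ⟨(x, false), hxroot, by simp [hF]; linear_combination -hy⟩
      · calc ((Q.roots.toFinset ×ˢ (Finset.univ : Finset Bool)).image F).card
            ≤ (Q.roots.toFinset ×ˢ (Finset.univ : Finset Bool)).card :=
              Finset.card_image_le
          _ = Q.roots.toFinset.card * 2 := by simp [Finset.card_product]
          _ ≤ 2 * 2 := by
              have := roots_toFinset_card_le hQd
              omega
          _ ≤ 4 := by norm_num
    · -- case A: y is determined by x; x satisfies a polynomial of degree ≤ 4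
      set w : ℂ := 2*v + a*u with hwdef
      set m : ℂ := 3*u^2 + 2*c*u - a*v with hm
      set k : ℂ := u^3 + c*u^2 + d*u - v^2 - a*u*v - b*v with hk
      set P : ℂ[X] := C (k^2 + b*w*k - w^2*e)
          + C (2*m*k + a*w*k + b*w*m - w^2*d) * X
          + C (m^2 + 2*(3*u)*k + a*w*m + b*w*(3*u) - w^2*c) * X^2
          + C (2*(3*u)*m + a*w*(3*u) - w^2) * X^3
          + C (9*u^2) * X^4 with hP
      have hPc4 : P.coeff 4 = 9*u^2 := by
        simp only [hP, coeff_add, coeff_C_mul, coeff_X, coeff_X_pow, coeff_C]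
        norm_num
      have hPc3 : P.coeff 3 = 2*(3*u)*m + a*w*(3*u) - w^2 := by
        simp only [hP, coeff_add, coeff_C_mul, coeff_X, coeff_X_pow, coeff_C]
        norm_num
      have hP0 : P ≠ 0 := by
        intro h
        have h4 : (9:ℂ)*u^2 = 0 := by rw [← hPc4, h]; simp
        have hu : u = 0 := by
          have h9 : (9:ℂ) ≠ 0 := by norm_num
          have hu2 : u^2 = 0 := (mul_eq_zero.1 h4).resolve_left h9
          exact pow_eq_zero_iff (n := 2) (by norm_num) |>.1 hu2
        have h3 : 2*(3*u)*m + a*w*(3*u) - w^2 = 0 := by rw [← hPc3, h]; simp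
        apply hw0
        have hw2 : w^2 = 0 := by rw [hu] at h3; linear_combination -h3
        exact pow_eq_zero_iff (n := 2) (by norm_num) |>.1 hw2
      have hPd : P.natDegree ≤ 4 := by rw [hP]; compute_degree
      refine ⟨P.roots.toFinset.image (fun x => (x, (3*u*x^2 + m*x + k)/w)), ?_, ?_⟩
      · rintro ⟨x, y⟩ ⟨h1, h2⟩
        simp only [Finset.coe_image, Set.mem_image, Finset.mem_coe,
          Multiset.mem_toFinset, mem_roots hP0]
        have hy : w * y = 3*u*x^2 + m*x + k := by
          rw [hwdef, hm, hk]; linear_combination h2 - h1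
        refine ⟨x, ?_, ?_⟩
        · simp only [IsRoot, hP, eval_add, eval_mul, eval_C, eval_X, eval_pow]
          linear_combination w^2 * h1
            - (3*u*x^2 + m*x + k + w*y + (a*x+b)*w) * hy
        · have hyy : (3*u*x^2 + m*x + k)/w = y := by
            rw [div_eq_iff hw0]; linear_combination -hy
          rw [hyy]
      · calc (P.roots.toFinset.image _).card
            ≤ P.roots.toFinset.card := Finset.card_image_le
          _ ≤ 4 := roots_toFinset_card_le hPd
  constructor
  · exact Set.Finite.subset T.finite_toSet hsub
  · exact (Set.ncard_le_ncard hsub T.finite_toSet).trans (by simpa using hcard)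
end

section
/- Let a, b, c, d, e ∈ ℝ and let (u, v) ∈ ℝ² with (u, v) ≠ (0, 0). Then there are at most 4 points (x, y) ∈ ℝ² such that both (x, y) and (x+u, y+v) lie on the curve y² + a·x·y + b·y = x³ + c·x² + d·x + e. (A fixed nonzero difference vector connects at most 4 pairs of points on a real Weierstrass cubic.) -/
/-!
Subtracting the curve equation at `(x, y)` from the one at `(x + u, y + v)` cancels `y²` and `x³`
and leaves `(2v + a₁u) y = R(x)` with `R` quadratic of leading coefficient `3u`. If
`2v + a₁u ≠ 0`, then `y` is a quadratic function `q(x)`, and `x` is a root of the quartic obtained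
by substituting `q` into the curve equation. Otherwise `u ≠ 0`, so `x` is one of the at most two
roots of `R`, and each vertical line meets the curve in at most two points.
-/

open Polynomial Polynomial.Bivariate

theorem Set.finite_and_ncard_le_of_forall_isRoot {R : Type*} [CommRing R] [IsDomain R]
    {S : Set (R × R)} {P : R[X]} {Q : R → R[X]} {n : ℕ} (hP : P ≠ 0) (hQ : ∀ x, Q x ≠ 0)
    (hQn : ∀ x, (Q x).natDegree ≤ n) (hS : ∀ p ∈ S, P.IsRoot p.1 ∧ (Q p.1).IsRoot p.2) :
    S.Finite ∧ S.ncard ≤ P.natDegree * n := by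
  classical
  set F := P.roots.toFinset.biUnion fun x => (Q x).roots.toFinset.image (x, ·)
  have hSF : S ⊆ F := by
    intro p hp
    simp only [F, Finset.mem_coe, Finset.mem_biUnion, Finset.mem_image, Multiset.mem_toFinset,
      mem_roots hP, mem_roots (hQ _)]
    exact ⟨p.1, (hS p hp).1, p.2, (hS p hp).2, rfl⟩
  have hroots (f : R[X]) : f.roots.toFinset.card ≤ f.natDegree :=
    (Multiset.toFinset_card_le _).trans f.card_roots'
  refine ⟨F.finite_toSet.subset hSF, (Set.ncard_le_ncard hSF F.finite_toSet).trans ?_⟩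
  rw [Set.ncard_coe_finset]
  refine (Finset.card_biUnion_le_card_mul _ _ n fun x _ => ?_).trans
    (Nat.mul_le_mul_right n (hroots P))
  exact Finset.card_image_le.trans ((hroots _).trans (hQn x))

namespace WeierstrassCurve.Affine

section IsDomain

variable {R : Type*} [CommRing R] [IsDomain R] (W : Affine R)

theorem finite_and_ncard_le_of_isRoot_fst {P : R[X]} (hP : P ≠ 0) :
    {p : R × R | P.IsRoot p.1 ∧ W.Equation p.1 p.2}.Finite ∧
      {p : R × R | P.IsRoot p.1 ∧ W.Equation p.1 p.2}.ncard ≤ P.natDegree * 2 := by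
  refine Set.finite_and_ncard_le_of_forall_isRoot (Q := fun x => W.polynomial.map (evalRingHom x))
    hP (fun _ => (W.monic_polynomial.map _).ne_zero)
    (fun _ => natDegree_map_le.trans W.natDegree_polynomial.le) ?_
  rintro p ⟨hx, hy⟩
  exact ⟨hx, by rwa [IsRoot, map_evalRingHom_eval]⟩

theorem finite_and_ncard_le_of_eq_eval (q : R[X]) :
    {p : R × R | W.Equation p.1 p.2 ∧ p.2 = q.eval p.1}.Finite ∧
      {p : R × R | W.Equation p.1 p.2 ∧ p.2 = q.eval p.1}.ncard ≤ max (2 * q.natDegree) 3 := by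
  -- `N = q² + (a₁X + a₃) q - (X³ + a₂X² + a₄X + a₆)` is the norm of `Y - q` in the coordinate
  -- ring, whose degree is known.
  set N := Algebra.norm R[X] ((-q) • (1 : W.CoordinateRing) + (1 : R[X]) • CoordinateRing.mk W Y)
  have hN : N.degree = max (2 • q.degree) 3 := by
    simpa [N] using CoordinateRing.degree_norm_smul_basis (W' := W) (-q) 1
  have hN0 : N ≠ 0 := ne_zero_of_coe_le_degree (n := 3) (hN ▸ le_max_right _ _)
  have hNdeg : N.natDegree ≤ max (2 * q.natDegree) 3 := by
    rw [natDegree_le_iff_degree_le, hN]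
    refine max_le ((nsmul_le_nsmul_right degree_le_natDegree 2).trans ?_) ?_
    · rw [nsmul_eq_mul]; exact_mod_cast le_max_left (2 * q.natDegree) 3
    · exact_mod_cast le_max_right (2 * q.natDegree) 3
  have hroots : ∀ p ∈ {p : R × R | W.Equation p.1 p.2 ∧ p.2 = q.eval p.1},
      N.IsRoot p.1 ∧ (X - C (q.eval p.1)).IsRoot p.2 := by
    rintro ⟨x, y⟩ ⟨hp, hy : y = q.eval x⟩
    subst hy
    refine ⟨?_, by simp⟩
    rw [equation_iff'] at hp
    simp only [N, IsRoot, CoordinateRing.norm_smul_basis, eval_sub, eval_add, eval_mul, eval_pow,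
      eval_neg, eval_one, eval_C, eval_X]
    linear_combination hp
  obtain ⟨hfin, hcard⟩ := Set.finite_and_ncard_le_of_forall_isRoot hN0
    (fun x => X_sub_C_ne_zero (q.eval x)) (fun _ => (natDegree_X_sub_C _).le) hroots
  exact ⟨hfin, hcard.trans ((mul_one _).trans_le hNdeg)⟩

end IsDomain

variable {K : Type*} [Field K] (W : Affine K)

noncomputable def shiftQuadratic (u v : K) : K[X] :=
  C (3 * u) * X ^ 2 + C (3 * u ^ 2 + 2 * W.a₂ * u - W.a₁ * v) * X +
    C (u ^ 3 + W.a₂ * u ^ 2 + W.a₄ * u - v ^ 2 - W.a₁ * u * v - W.a₃ * v)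

theorem natDegree_shiftQuadratic_le (u v : K) : (W.shiftQuadratic u v).natDegree ≤ 2 := by
  unfold shiftQuadratic; compute_degree

theorem coeff_shiftQuadratic_two (u v : K) : (W.shiftQuadratic u v).coeff 2 = 3 * u := by
  simp only [shiftQuadratic, coeff_add, coeff_C_mul, coeff_X_pow, coeff_X, coeff_C]
  norm_num

variable {W} in
theorem Equation.mul_eq_eval_shiftQuadratic {x y u v : K} (h : W.Equation x y)
    (h' : W.Equation (x + u) (y + v)) :
    (2 * v + W.a₁ * u) * y = (W.shiftQuadratic u v).eval x := by
  rw [equation_iff] at h h'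
  simp only [shiftQuadratic, eval_add, eval_mul, eval_pow, eval_C, eval_X]
  linear_combination h' - h

theorem finite_and_ncard_le_four_of_shift (h2 : (2 : K) ≠ 0) (h3 : (3 : K) ≠ 0) {u v : K}
    (huv : (u, v) ≠ (0, 0)) :
    {p : K × K | W.Equation p.1 p.2 ∧ W.Equation (p.1 + u) (p.2 + v)}.Finite ∧
      {p : K × K | W.Equation p.1 p.2 ∧ W.Equation (p.1 + u) (p.2 + v)}.ncard ≤ 4 := by
  set S := {p : K × K | W.Equation p.1 p.2 ∧ W.Equation (p.1 + u) (p.2 + v)}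
  have hR := W.natDegree_shiftQuadratic_le u v
  by_cases hA : 2 * v + W.a₁ * u = 0
  · have hu : u ≠ 0 := by
      rintro rfl
      exact huv (by simpa [h2] using hA)
    have hR0 : W.shiftQuadratic u v ≠ 0 := fun h0 => by
      simpa [h0, h3, hu] using W.coeff_shiftQuadratic_two u v
    have hT := W.finite_and_ncard_le_of_isRoot_fst hR0
    have hST : S ⊆ {p | (W.shiftQuadratic u v).IsRoot p.1 ∧ W.Equation p.1 p.2} :=
      fun p ⟨h, h'⟩ => ⟨by simpa [hA] using (h.mul_eq_eval_shiftQuadratic h').symm, h⟩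
    exact ⟨hT.1.subset hST, (Set.ncard_le_ncard hST hT.1).trans (hT.2.trans (by omega))⟩
  · set q := C (2 * v + W.a₁ * u)⁻¹ * W.shiftQuadratic u v
    have hq : q.natDegree ≤ 2 := (natDegree_C_mul_le _ _).trans hR
    have hT := W.finite_and_ncard_le_of_eq_eval q
    have hST : S ⊆ {p | W.Equation p.1 p.2 ∧ p.2 = q.eval p.1} := by
      rintro p ⟨h, h'⟩
      refine ⟨h, ?_⟩
      rw [eval_mul, eval_C, ← h.mul_eq_eval_shiftQuadratic h', inv_mul_cancel_left₀ hA]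
    exact ⟨hT.1.subset hST, (Set.ncard_le_ncard hST hT.1).trans (hT.2.trans (by omega))⟩

end WeierstrassCurve.Affine

/-- A fixed nonzero difference vector connects at most 4 pairs of points on a
real Weierstrass cubic. -/
theorem weierstrass_difference_vector_real
    (a b c d e u v : ℝ) (huv : (u, v) ≠ (0, 0)) :
    {p : ℝ × ℝ |
        p.2 ^ 2 + a * p.1 * p.2 + b * p.2 =
          p.1 ^ 3 + c * p.1 ^ 2 + d * p.1 + e ∧
        (p.2 + v) ^ 2 + a * (p.1 + u) * (p.2 + v) + b * (p.2 + v) =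
          (p.1 + u) ^ 3 + c * (p.1 + u) ^ 2 + d * (p.1 + u) + e}.Finite ∧
    {p : ℝ × ℝ |
        p.2 ^ 2 + a * p.1 * p.2 + b * p.2 =
          p.1 ^ 3 + c * p.1 ^ 2 + d * p.1 + e ∧
        (p.2 + v) ^ 2 + a * (p.1 + u) * (p.2 + v) + b * (p.2 + v) =
          (p.1 + u) ^ 3 + c * (p.1 + u) ^ 2 + d * (p.1 + u) + e}.ncard ≤ 4 := by
  let W : WeierstrassCurve.Affine ℝ := ⟨a, c, b, d, e⟩
  simpa only [WeierstrassCurve.Affine.equation_iff] using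
    W.finite_and_ncard_le_four_of_shift two_ne_zero three_ne_zero huv
end

section
/- Let a, b, c, d, e ∈ ℝ define an elliptic curve y² + a·x·y + b·y = x³ + c·x² + d·x + e (the discriminant of this Weierstrass equation is nonzero). Let k be a positive integer and let G = {(a₁ + i·e₁, a₂ + j·e₂) : 0 ≤ i, j ≤ k−1} be a k×k grid with e₁ ≠ 0 and e₂ ≠ 0. If the curve contains at least k distinct points of G, then k < 174960. -/
/-!
Completing the square, a grid point `(i, j)` on the curve satisfies `w² = P(i)`, where
`w = c₂ j + c₁ i + c₀` is affine with `c₂ ≠ 0` and `P` is a real cubic. Away from the at most seven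
zeros of `P` and of `2PP'' - P'²`, each sign of `w` makes `j` a function of `i` whose second
derivative `(2PP'' - P'²) / (4 c₂ P^{3/2})` has constant sign between consecutive zeros. So the
points split into at most 14 isolated ones and 16 lattice chains on strictly convex or concave
graphs. The steps of such a chain in `[0, k)²` are distinct vectors `(dx, dy)` with `dx > 0` and
`∑ (dx + |dy|) ≤ 3k`; since at most `t²` of them have `dx + |dy| ≤ t`, a chain has at most
`1 + (3k + ∑_{t<L} t²) / L` points for every `L`, and `L = 104` gives `k < 174960`.
-/

open Finset Polynomial

lemma card_filter_natAbs_add_natAbs_le_sq (V : Finset (ℤ × ℤ)) (hV : ∀ v ∈ V, 0 < v.1) (t : ℕ) :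
    #{v ∈ V | v.1.natAbs + v.2.natAbs ≤ t} ≤ t ^ 2 := by
  -- the vectors with `v.1 = t - j` go to the hook `{(j, y) | y ≤ j} ∪ {(y, j) | y < j}`
  have hinj : Set.InjOn (fun v : ℤ × ℤ => if 0 ≤ v.2 then (t - v.1.natAbs, v.2.natAbs)
      else (v.2.natAbs - 1, t - v.1.natAbs)) ↑{v ∈ V | v.1.natAbs + v.2.natAbs ≤ t} := by
    rintro v hv w hw hvw
    simp only [mem_coe, mem_filter] at hv hw
    have := hV v hv.1
    have := hV w hw.1
    dsimp only at hvw
    split_ifs at hvw <;> simp only [Prod.mk.injEq] at hvw <;> ext <;> omega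
  calc #{v ∈ V | v.1.natAbs + v.2.natAbs ≤ t} ≤ #(range t ×ˢ range t) := by
        refine card_le_card_of_injOn _ (fun v hv => ?_) hinj
        simp only [mem_coe, mem_filter] at hv
        have := hV v hv.1
        simp only [coe_product, coe_range, Set.mem_prod, Set.mem_Iio]
        split_ifs <;> omega
    _ = t ^ 2 := by rw [card_product, card_range, sq]

lemma mul_card_le_sum_add_sum_card_filter_le {α : Type*} (V : Finset α) (ν : α → ℕ) (L : ℕ) :
    L * #V ≤ ∑ v ∈ V, ν v + ∑ t ∈ range L, #{v ∈ V | ν v ≤ t} := by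
  have hlayers : ∑ t ∈ range L, #{v ∈ V | t < ν v} ≤ ∑ v ∈ V, ν v := by
    refine (sum_card_bipartiteAbove_eq_sum_card_bipartiteBelow (r := fun t v => t < ν v)).le.trans
      (sum_le_sum fun v _ => ?_)
    calc #(bipartiteBelow (fun t v => t < ν v) (range L) v) ≤ #(range (ν v)) :=
          card_le_card fun t ht => by simp_all [bipartiteBelow]
      _ = ν v := card_range _
  calc L * #V = ∑ t ∈ range L, (#{v ∈ V | ν v ≤ t} + #{v ∈ V | t < ν v}) := by
        simp only [← not_le, card_filter_add_card_filter_not, sum_const, card_range, smul_eq_mul]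
    _ ≤ _ := by rw [sum_add_distrib, add_comm]; gcongr

lemma mul_card_le_sum_natAbs_add_sum_sq (V : Finset (ℤ × ℤ)) (hV : ∀ v ∈ V, 0 < v.1) (L : ℕ) :
    L * #V ≤ ∑ v ∈ V, (v.1.natAbs + v.2.natAbs) + ∑ t ∈ range L, t ^ 2 :=
  (mul_card_le_sum_add_sum_card_filter_le V _ L).trans <| by
    gcongr with t; exact card_filter_natAbs_add_natAbs_le_sq V hV t

lemma eq_range_card_of_forall_lt_mem (S : Finset ℕ) (hS : ∀ m' ∈ S, ∀ m < m', m ∈ S) :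
    S = range #S := by
  rcases S.eq_empty_or_nonempty with rfl | hne
  · simp
  have hmax : S = range (S.max' hne + 1) := by
    ext m
    simp only [mem_range, Nat.lt_succ_iff]
    exact ⟨S.le_max' m, fun hm => hm.lt_or_eq.elim (hS _ (S.max'_mem hne) m) (· ▸ S.max'_mem hne)⟩
  rw [hmax, card_range]

lemma sum_abs_sub_le_of_descents_prefix (y : ℕ → ℤ) (N : ℕ) (K : ℤ)
    (hy : ∀ m ≤ N, 0 ≤ y m ∧ y m ≤ K)
    (hdesc : ∀ m m', m < m' → m' < N → y (m' + 1) < y m' → y (m + 1) < y m) :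
    ∑ m ∈ range N, |y (m + 1) - y m| ≤ 2 * K := by
  set D := {m ∈ range N | y (m + 1) < y m}
  have hD : D = range #D := eq_range_card_of_forall_lt_mem D fun m' hm' m hm => by
    simp only [D, mem_filter, mem_range] at hm' ⊢
    exact ⟨by omega, hdesc m m' hm hm'.1 hm'.2⟩
  have hDN : #D ≤ N := by simpa using card_le_card (filter_subset _ (range N))
  have hsplit : ∑ m ∈ range N, |y (m + 1) - y m|
      = ∑ m ∈ range N, (y (m + 1) - y m) - 2 * ∑ m ∈ D, (y (m + 1) - y m) := by
    rw [sum_filter, mul_sum, ← sum_sub_distrib]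
    refine sum_congr rfl fun m _ => ?_
    split_ifs with h
    · rw [abs_of_neg (sub_neg.2 h)]; ring
    · rw [abs_of_nonneg (sub_nonneg.2 (not_lt.1 h))]; ring
  rw [hsplit, sum_range_sub, hD, sum_range_sub]
  linarith [hy 0 (Nat.zero_le _), hy N le_rfl, hy #D hDN]

lemma mul_card_le_of_slope_lt {k : ℕ} (s : Finset ℕ) (g : ℕ → ℕ) (hs : ∀ x ∈ s, x < k ∧ g x < k)
    (hslope : ∀ x ∈ s, ∀ y ∈ s, ∀ z ∈ s, x < y → y < z →
      ((g y : ℝ) - g x) / ((y : ℝ) - x) < ((g z : ℝ) - g y) / ((z : ℝ) - y)) (L : ℕ) :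
    L * #s ≤ L + 3 * k + ∑ t ∈ range L, t ^ 2 := by
  obtain hs0 | ⟨N, hN⟩ : #s = 0 ∨ ∃ N, #s = N + 1 := by cases #s <;> simp
  · simp [hs0]
  -- `X 0 < X 1 < ⋯ < X N` enumerates `s`; the chain's steps `d m` are pairwise distinct lattice
  -- vectors because their slopes `q m` increase strictly
  have hfin : (Set.ofPred (· ∈ s)).Finite := s.finite_toSet
  have hcard : #hfin.toFinset = N + 1 := by rw [← hN]; congr 1; ext; simp
  set X := Nat.nth (· ∈ s)
  have hXs : ∀ m ≤ N, X m ∈ s := fun m hm => Nat.nth_mem_of_lt_card hfin (by omega)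
  have hXlt : ∀ m m', m < m' → m' ≤ N → X m < X m' := fun m m' h hm' =>
    Nat.nth_lt_nth_of_lt_card hfin h (by omega)
  have hXk : ∀ m ≤ N, X m < k ∧ g (X m) < k := fun m hm => hs _ (hXs m hm)
  set d : ℕ → ℤ × ℤ := fun m => ((X (m + 1) : ℤ) - X m, (g (X (m + 1)) : ℤ) - g (X m))
  set q : ℕ → ℝ := fun m => ((d m).2 : ℝ) / (d m).1
  have hdx : ∀ m < N, 0 < (d m).1 := fun m hm => by
    have := hXlt m (m + 1) (by omega) hm; simp only [d]; omega
  have hq : StrictMonoOn q (Set.Iio N) := by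
    refine strictMonoOn_of_lt_succ Set.ordConnected_Iio fun m _ _ hm => ?_
    simp only [Order.succ_eq_add_one, Set.mem_Iio] at hm ⊢
    simp only [q, d]
    push_cast
    exact hslope _ (hXs m (by omega)) _ (hXs (m + 1) (by omega)) _ (hXs (m + 2) (by omega))
      (by exact_mod_cast hXlt m (m + 1) (by omega) (by omega))
      (by exact_mod_cast hXlt (m + 1) (m + 2) (by omega) (by omega))
  have hq_neg : ∀ m < N, q m < 0 ↔ (d m).2 < 0 := fun m hm => by
    have : (0 : ℝ) < (d m).1 := by exact_mod_cast hdx m hm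
    simp only [q, div_neg_iff, this, this.not_gt, Int.cast_pos, Int.cast_lt_zero]
    tauto
  have hd_inj : Set.InjOn d (range N) := by
    intro m hm m' hm' h
    rw [coe_range] at hm hm'
    exact hq.injOn hm hm' (by simp only [q, h])
  set V := (range N).image d
  have hV : ∀ v ∈ V, 0 < v.1 := by
    simp only [V, mem_image, mem_range]
    rintro _ ⟨m, hm, rfl⟩
    exact hdx m hm
  have hsum_dx : ∑ m ∈ range N, (d m).1 ≤ k - 1 := by
    simp only [d]
    rw [sum_range_sub (fun m => (X m : ℤ))]
    have := hXk N le_rfl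
    omega
  have hsum_dy : ∑ m ∈ range N, |(d m).2| ≤ 2 * (k - 1) := by
    refine sum_abs_sub_le_of_descents_prefix (fun m => g (X m)) N (k - 1)
      (fun m hm => by have := hXk m hm; omega) fun m m' h hm' hdesc => ?_
    rw [← sub_neg] at hdesc ⊢
    rw [← hq_neg m (by omega)]
    exact (hq (h.trans hm') hm' h).trans ((hq_neg m' hm').2 hdesc)
  have hnorm : ∑ v ∈ V, (v.1.natAbs + v.2.natAbs) ≤ 3 * k := by
    rw [sum_image hd_inj]
    zify
    rw [sum_add_distrib, sum_congr rfl fun m hm => abs_of_pos (hdx m (mem_range.1 hm))]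
    omega
  have hVN : #V = N := card_image_of_injOn hd_inj |>.trans (card_range N)
  have := mul_card_le_sum_natAbs_add_sum_sq V hV L
  rw [hVN] at this
  rw [hN, mul_add_one]
  omega

lemma StrictConvexOn.mul_card_le {k : ℕ} {D : Set ℝ} {f : ℝ → ℝ} (hf : StrictConvexOn ℝ D f)
    (C : Finset (ℕ × ℕ)) (hC : ∀ p ∈ C, p.1 < k ∧ p.2 < k ∧ (p.1 : ℝ) ∈ D ∧ f p.1 = p.2)
    (L : ℕ) : L * #C ≤ L + 3 * k + ∑ t ∈ range L, t ^ 2 := by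
  have hinj : Set.InjOn Prod.fst (C : Set (ℕ × ℕ)) := fun p hp q hq h => Prod.ext h <| by
    have hp := (hC p hp).2.2.2
    have hq := (hC q hq).2.2.2
    rw [h, hq] at hp
    exact_mod_cast hp.symm
  have hfloor : ∀ x ∈ C.image Prod.fst, x < k ∧ ⌊f x⌋₊ < k ∧ (x : ℝ) ∈ D ∧ f x = ⌊f x⌋₊ := by
    simp only [mem_image]
    rintro _ ⟨p, hp, rfl⟩
    obtain ⟨h1, h2, hD, hfp⟩ := hC p hp
    rw [hfp, Nat.floor_natCast]
    exact ⟨h1, h2, hD, rfl⟩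
  rw [← card_image_of_injOn hinj]
  refine mul_card_le_of_slope_lt _ (fun x => ⌊f x⌋₊)
    (fun x hx => ⟨(hfloor x hx).1, (hfloor x hx).2.1⟩) (fun x hx y hy z hz hxy hyz => ?_) L
  rw [← (hfloor x hx).2.2.2, ← (hfloor y hy).2.2.2, ← (hfloor z hz).2.2.2]
  exact hf.slope_strict_mono_adjacent (hfloor x hx).2.2.1 (hfloor z hz).2.2.1
    (by exact_mod_cast hxy) (by exact_mod_cast hyz)

lemma StrictConcaveOn.mul_card_le {k : ℕ} {D : Set ℝ} {f : ℝ → ℝ} (hf : StrictConcaveOn ℝ D f)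
    (C : Finset (ℕ × ℕ)) (hC : ∀ p ∈ C, p.1 < k ∧ p.2 < k ∧ (p.1 : ℝ) ∈ D ∧ f p.1 = p.2)
    (L : ℕ) : L * #C ≤ L + 3 * k + ∑ t ∈ range L, t ^ 2 := by
  have hinj : Set.InjOn (fun p : ℕ × ℕ => (p.1, k - 1 - p.2)) C := fun p hp q hq h => by
    have := (hC p hp).2.1
    have := (hC q hq).2.1
    simp only [Prod.mk.injEq] at h
    ext <;> omega
  rw [← card_image_of_injOn hinj]
  refine ((convexOn_const ((k : ℝ) - 1) hf.1).sub_strictConcaveOn hf).mul_card_le _ ?_ L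
  simp only [mem_image]
  rintro _ ⟨p, hp, rfl⟩
  obtain ⟨h1, h2, hD, hfp⟩ := hC p hp
  refine ⟨h1, by omega, hD, ?_⟩
  rw [Nat.sub_sub, Nat.cast_sub (by omega), Pi.sub_apply, hfp]
  push_cast
  ring

lemma IsPreconnected.forall_pos_or_forall_neg {s : Set ℝ} (hs : IsPreconnected s) {f : ℝ → ℝ}
    (hf : ContinuousOn f s) (h0 : ∀ x ∈ s, f x ≠ 0) : (∀ x ∈ s, 0 < f x) ∨ (∀ x ∈ s, f x < 0) := by
  by_contra! ⟨⟨x, hx, hfx⟩, ⟨y, hy, hfy⟩⟩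
  obtain ⟨z, hz, hfz⟩ := hs.intermediate_value hx hy hf ⟨hfx, hfy⟩
  exact h0 z hz hfz

lemma Finset.ordConnected_setOf_notMem_card_filter_lt_eq {α : Type*} [LinearOrder α]
    (Z : Finset α) (j : ℕ) : {x | x ∉ Z ∧ #{z ∈ Z | z < x} = j}.OrdConnected := by
  refine ⟨fun x ⟨hxZ, hx⟩ y ⟨hyZ, hy⟩ w hw => ?_⟩
  have hsub : ∀ {u v : α}, u ≤ v → {z ∈ Z | z < u} ⊆ {z ∈ Z | z < v} := fun huv z hz => by
    simp only [mem_filter] at hz ⊢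
    exact ⟨hz.1, hz.2.trans_le huv⟩
  have hwZ : w ∉ Z := fun hw' => by
    have hwy : w < y := hw.2.lt_of_ne fun h => hyZ (h ▸ hw')
    have : #{z ∈ Z | z < x} < #{z ∈ Z | z < y} := card_lt_card
      ⟨hsub (hw.1.trans hw.2), fun h => by
        simpa using (mem_filter.1 (h (mem_filter.2 ⟨hw', hwy⟩))).2.trans_le hw.1⟩
    omega
  exact ⟨hwZ, le_antisymm (hy ▸ card_le_card (hsub hw.2)) (hx ▸ card_le_card (hsub hw.1))⟩

lemma deriv2_sqrt_sub_div {Q Q₁ Q₂ : ℝ → ℝ} (hQ : ∀ x, HasDerivAt Q (Q₁ x) x)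
    (hQ₁ : ∀ x, HasDerivAt Q₁ (Q₂ x) x) (m b c : ℝ) {x : ℝ} (hx : 0 < Q x) :
    deriv^[2] (fun x => (√(Q x) - m * x - b) / c) x
      = (2 * Q x * Q₂ x - Q₁ x ^ 2) / c / (4 * Q x * √(Q x)) := by
  have hsqrt : ∀ y, 0 < Q y → HasDerivAt (fun z => √(Q z)) (Q₁ y / (2 * √(Q y))) y := fun y hy =>
    ((Real.hasDerivAt_sqrt hy.ne').comp y (hQ y)).congr_deriv (by ring)
  have hderiv : deriv (fun x => (√(Q x) - m * x - b) / c) =ᶠ[nhds x]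
      fun y => (Q₁ y / (2 * √(Q y)) - m) / c := by
    filter_upwards [(isOpen_lt continuous_const
      (continuous_iff_continuousAt.2 fun y => (hQ y).continuousAt)).mem_nhds hx] with y hy
    exact ((((hsqrt y hy).sub ((hasDerivAt_id y).const_mul m)).sub_const b).div_const c).deriv.trans
      (by simp)
  have hsx : 0 < √(Q x) := Real.sqrt_pos.2 hx
  have h2 : HasDerivAt (fun y => (Q₁ y / (2 * √(Q y)) - m) / c)
      ((Q₂ x * (2 * √(Q x)) - Q₁ x * (2 * (Q₁ x / (2 * √(Q x))))) / (2 * √(Q x)) ^ 2 / c) x :=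
    ((((hQ₁ x).div ((hsqrt x hx).const_mul 2) (by positivity)).sub_const m).div_const c)
  rw [Function.iterate_succ_apply', Function.iterate_one, hderiv.deriv_eq, h2.deriv]
  have hsq : √(Q x) ^ 2 = Q x := Real.sq_sqrt hx.le
  field_simp
  rw [hsq]
  ring

lemma strictConvexOn_or_strictConcaveOn_sqrt_sub_div {Q Q₁ Q₂ : ℝ → ℝ}
    (hQ : ∀ x, HasDerivAt Q (Q₁ x) x) (hQ₁ : ∀ x, HasDerivAt Q₁ (Q₂ x) x) (m b c : ℝ)
    {D : Set ℝ} (hD : Convex ℝ D) (hpos : ∀ x ∈ D, 0 < Q x)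
    (hsign : (∀ x ∈ D, 0 < (2 * Q x * Q₂ x - Q₁ x ^ 2) / c) ∨
      (∀ x ∈ D, (2 * Q x * Q₂ x - Q₁ x ^ 2) / c < 0)) :
    StrictConvexOn ℝ D (fun x => (√(Q x) - m * x - b) / c) ∨
      StrictConcaveOn ℝ D (fun x => (√(Q x) - m * x - b) / c) := by
  have hcont : ContinuousOn (fun x => (√(Q x) - m * x - b) / c) D := by
    have : Continuous Q := continuous_iff_continuousAt.2 fun y => (hQ y).continuousAt
    fun_prop
  have hden : ∀ x ∈ interior D, 0 < 4 * Q x * √(Q x) := fun x hx => by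
    have := hpos x (interior_subset hx)
    positivity
  refine hsign.imp (fun h => strictConvexOn_of_deriv2_pos hD hcont fun x hx => ?_)
    (fun h => strictConcaveOn_of_deriv2_neg hD hcont fun x hx => ?_)
  all_goals rw [deriv2_sqrt_sub_div hQ hQ₁ m b c (hpos x (interior_subset hx))]
  · exact div_pos (h x (interior_subset hx)) (hden x hx)
  · exact div_neg_of_neg_of_pos (h x (interior_subset hx)) (hden x hx)

/-- `(√P)'' = sqrtDeriv2Num P / (4 P √P)` wherever `P > 0`. -/
noncomputable def sqrtDeriv2Num (P : ℝ[X]) : ℝ[X] :=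
  C 2 * (P * derivative (derivative P)) - derivative P ^ 2

lemma eval_sqrtDeriv2Num (P : ℝ[X]) (x : ℝ) : (sqrtDeriv2Num P).eval x
    = 2 * P.eval x * (derivative (derivative P)).eval x - (derivative P).eval x ^ 2 := by
  simp [sqrtDeriv2Num, mul_assoc]

lemma eq_sqrt_sub_div_of_sq_eq {a b c x y w : ℝ} (ha : a ≠ 0) (h : (a * y + b * x + c) ^ 2 = w)
    (h0 : 0 ≤ a * y + b * x + c) : (√w - b * x - c) / a = y := by
  rw [← h, Real.sqrt_sq h0]
  field_simp
  ring

lemma mul_card_filter_component_le (P : ℝ[X]) (Z : Finset ℝ)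
    (hZ : ∀ x ∉ Z, P.eval x ≠ 0 ∧ (sqrtDeriv2Num P).eval x ≠ 0)
    {c₂ : ℝ} (c₁ c₀ : ℝ) (hc₂ : c₂ ≠ 0) {k : ℕ} {S : Finset (ℕ × ℕ)} (hS : S ⊆ range k ×ˢ range k)
    (hSP : ∀ p ∈ S, (c₂ * p.2 + c₁ * p.1 + c₀) ^ 2 = P.eval (p.1 : ℝ)) (L j : ℕ) :
    L * #{p ∈ S | 0 ≤ c₂ * p.2 + c₁ * p.1 + c₀ ∧ (p.1 : ℝ) ∉ Z ∧ #{z ∈ Z | z < (p.1 : ℝ)} = j}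
      ≤ L + 3 * k + ∑ t ∈ range L, t ^ 2 := by
  set C := {p ∈ S | 0 ≤ c₂ * p.2 + c₁ * p.1 + c₀ ∧ (p.1 : ℝ) ∉ Z ∧ #{z ∈ Z | z < (p.1 : ℝ)} = j}
  set I := {x : ℝ | x ∉ Z ∧ #{z ∈ Z | z < x} = j}
  have hI : I.OrdConnected := Z.ordConnected_setOf_notMem_card_filter_lt_eq j
  have hmem : ∀ p ∈ C, p.1 < k ∧ p.2 < k ∧ (p.1 : ℝ) ∈ I ∧
      (√(P.eval (p.1 : ℝ)) - c₁ * p.1 - c₀) / c₂ = p.2 := fun p hp => by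
    obtain ⟨hpS, hW, hpZ, hpj⟩ := mem_filter.1 hp
    have := hS hpS
    simp only [mem_product, mem_range] at this
    exact ⟨this.1, this.2, ⟨hpZ, hpj⟩, eq_sqrt_sub_div_of_sq_eq hc₂ (hSP p hpS) hW⟩
  rcases C.eq_empty_or_nonempty with hC | ⟨p₀, hp₀⟩
  · simp [hC]
  have hpos : ∀ x ∈ I, 0 < P.eval x := by
    refine (hI.isPreconnected.forall_pos_or_forall_neg P.continuous.continuousOn
      fun x hx => (hZ x hx.1).1).resolve_right fun hneg => ?_
    have := hneg _ (hmem p₀ hp₀).2.2.1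
    rw [← hSP p₀ (mem_filter.1 hp₀).1] at this
    exact (sq_nonneg _).not_gt this
  have hsign := hI.isPreconnected.forall_pos_or_forall_neg
    (f := fun x => (2 * P.eval x * (derivative (derivative P)).eval x
      - (derivative P).eval x ^ 2) / c₂) (by fun_prop) fun x hx =>
        div_ne_zero (eval_sqrtDeriv2Num P x ▸ (hZ x hx.1).2) hc₂
  rcases strictConvexOn_or_strictConcaveOn_sqrt_sub_div P.hasDerivAt (derivative P).hasDerivAt
    c₁ c₀ c₂ hI.convex hpos hsign with hconv | hconc
  · exact hconv.mul_card_le C hmem L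
  · exact hconc.mul_card_le C hmem L

lemma mul_card_filter_nonneg_le (P : ℝ[X]) (Z : Finset ℝ)
    (hZ : ∀ x ∉ Z, P.eval x ≠ 0 ∧ (sqrtDeriv2Num P).eval x ≠ 0)
    {c₂ : ℝ} (c₁ c₀ : ℝ) (hc₂ : c₂ ≠ 0) {k : ℕ} {S : Finset (ℕ × ℕ)} (hS : S ⊆ range k ×ˢ range k)
    (hSP : ∀ p ∈ S, (c₂ * p.2 + c₁ * p.1 + c₀) ^ 2 = P.eval (p.1 : ℝ)) (L : ℕ) :
    L * #{p ∈ S | 0 ≤ c₂ * p.2 + c₁ * p.1 + c₀}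
      ≤ L * #Z + (#Z + 1) * (L + 3 * k + ∑ t ∈ range L, t ^ 2) := by
  set W : ℕ × ℕ → ℝ := fun p => c₂ * p.2 + c₁ * p.1 + c₀
  have hsplit : #{p ∈ S | 0 ≤ W p} = #{p ∈ S | 0 ≤ W p ∧ (p.1 : ℝ) ∈ Z}
      + #{p ∈ S | 0 ≤ W p ∧ (p.1 : ℝ) ∉ Z} := by
    rw [← filter_filter, ← filter_filter, card_filter_add_card_filter_not]
  have hroots : #{p ∈ S | 0 ≤ W p ∧ (p.1 : ℝ) ∈ Z} ≤ #Z := by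
    refine card_le_card_of_injOn (fun p => (p.1 : ℝ)) (fun p hp => (mem_filter.1 hp).2.2)
      fun p hp q hq h => ?_
    obtain ⟨hpS, hpW, -⟩ := mem_filter.1 hp
    obtain ⟨hqS, hqW, -⟩ := mem_filter.1 hq
    have hp := eq_sqrt_sub_div_of_sq_eq hc₂ (hSP p hpS) hpW
    have hq := eq_sqrt_sub_div_of_sq_eq hc₂ (hSP q hqS) hqW
    rw [show (p.1 : ℝ) = q.1 from h] at hp
    exact Prod.ext (Nat.cast_injective (R := ℝ) h) (by exact_mod_cast hp.symm.trans hq)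
  have hcomponents : #{p ∈ S | 0 ≤ W p ∧ (p.1 : ℝ) ∉ Z} = ∑ j ∈ range (#Z + 1),
      #{p ∈ S | 0 ≤ W p ∧ (p.1 : ℝ) ∉ Z ∧ #{z ∈ Z | z < (p.1 : ℝ)} = j} := by
    rw [card_eq_sum_card_fiberwise (f := fun p => #{z ∈ Z | z < (p.1 : ℝ)}) fun p _ =>
      mem_range.2 (Nat.lt_succ_of_le (card_filter_le _ _))]
    simp only [filter_filter, and_assoc]
  calc L * #{p ∈ S | 0 ≤ W p}
      = L * #{p ∈ S | 0 ≤ W p ∧ (p.1 : ℝ) ∈ Z} + ∑ j ∈ range (#Z + 1),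
          L * #{p ∈ S | 0 ≤ W p ∧ (p.1 : ℝ) ∉ Z ∧ #{z ∈ Z | z < (p.1 : ℝ)} = j} := by
        rw [hsplit, hcomponents, mul_add, mul_sum]
    _ ≤ L * #Z + ∑ j ∈ range (#Z + 1), (L + 3 * k + ∑ t ∈ range L, t ^ 2) := by
        gcongr with j
        exact mul_card_filter_component_le P Z hZ c₁ c₀ hc₂ hS hSP L j
    _ = _ := by rw [sum_const, card_range, smul_eq_mul]

lemma mul_card_le_of_sq_eq_eval (P : ℝ[X]) (Z : Finset ℝ)
    (hZ : ∀ x ∉ Z, P.eval x ≠ 0 ∧ (sqrtDeriv2Num P).eval x ≠ 0)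
    {c₂ : ℝ} (c₁ c₀ : ℝ) (hc₂ : c₂ ≠ 0) {k : ℕ} {S : Finset (ℕ × ℕ)} (hS : S ⊆ range k ×ˢ range k)
    (hSP : ∀ p ∈ S, (c₂ * p.2 + c₁ * p.1 + c₀) ^ 2 = P.eval (p.1 : ℝ)) (L : ℕ) :
    L * #S ≤ 2 * (L * #Z + (#Z + 1) * (L + 3 * k + ∑ t ∈ range L, t ^ 2)) := by
  have hcover : S ⊆ {p ∈ S | 0 ≤ c₂ * p.2 + c₁ * p.1 + c₀} ∪
      {p ∈ S | 0 ≤ -c₂ * p.2 + -c₁ * p.1 + -c₀} := fun p hp => by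
    simp only [mem_union, mem_filter, hp, true_and]
    by_contra! h
    linarith [h.1, h.2]
  have hneg := mul_card_filter_nonneg_le P Z hZ (-c₁) (-c₀) (neg_ne_zero.2 hc₂) hS
    (fun p hp => by rw [← hSP p hp]; ring) L
  have hpos := mul_card_filter_nonneg_le P Z hZ c₁ c₀ hc₂ hS hSP L
  calc L * #S ≤ L * (#{p ∈ S | 0 ≤ c₂ * p.2 + c₁ * p.1 + c₀}
      + #{p ∈ S | 0 ≤ -c₂ * p.2 + -c₁ * p.1 + -c₀}) :=
        Nat.mul_le_mul_left L ((card_le_card hcover).trans (card_union_le _ _))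
    _ ≤ _ := by rw [mul_add]; omega

lemma exists_card_le_seven_eval_ne_zero (P : ℝ[X]) (hP : P.natDegree = 3) :
    ∃ Z : Finset ℝ, #Z ≤ 7 ∧ ∀ x ∉ Z, P.eval x ≠ 0 ∧ (sqrtDeriv2Num P).eval x ≠ 0 := by
  set H := sqrtDeriv2Num P
  have hP0 : P ≠ 0 := by rintro rfl; simp at hP
  have hP' : (derivative P).natDegree ≤ 2 := (natDegree_derivative_le P).trans (by omega)
  have hP'' : (derivative (derivative P)).natDegree ≤ 1 :=
    (natDegree_derivative_le _).trans (by omega)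
  have hH : H.natDegree ≤ 4 := natDegree_sub_le_of_le ((natDegree_C_mul_le _ _).trans
    (natDegree_mul_le_of_le hP.le hP'')) (natDegree_pow_le_of_le 2 hP')
  have hH4 : H.coeff 4 = 3 * P.leadingCoeff ^ 2 := by
    simp only [H, sqrtDeriv2Num]
    rw [coeff_sub, coeff_C_mul,
      coeff_mul_add_eq_of_natDegree_le (df := 3) (dg := 1) hP.le hP'',
      coeff_pow_of_natDegree_le (n := 2) hP', coeff_derivative, coeff_derivative, leadingCoeff, hP]
    norm_num
    ring
  have hH0 : H ≠ 0 := fun h => by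
    have : 3 * P.leadingCoeff ^ 2 ≠ 0 := by simp [hP0]
    rw [← hH4, h, coeff_zero] at this
    exact this rfl
  refine ⟨(P * H).roots.toFinset, ?_, fun x hx => ?_⟩
  · calc #(P * H).roots.toFinset ≤ (P * H).natDegree :=
          (Multiset.toFinset_card_le _).trans (card_roots' _)
      _ ≤ 7 := by rw [natDegree_mul hP0 hH0]; omega
  · rwa [Multiset.mem_toFinset, mem_roots (mul_ne_zero hP0 hH0), IsRoot, eval_mul, mul_eq_zero,
      not_or] at hx

theorem elliptic_curve_grid_points_lt_general
    (a b c d e : ℝ)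
    (k : ℕ)
    (a₁ a₂ e₁ e₂ : ℝ) (he₁ : e₁ ≠ 0) (he₂ : e₂ ≠ 0)
    (h : k ≤ ((Finset.range k ×ˢ Finset.range k).filter
        (fun p : ℕ × ℕ =>
          (a₂ + (p.2 : ℝ) * e₂) ^ 2
            + a * (a₁ + (p.1 : ℝ) * e₁) * (a₂ + (p.2 : ℝ) * e₂)
            + b * (a₂ + (p.2 : ℝ) * e₂)
          = (a₁ + (p.1 : ℝ) * e₁) ^ 3 + c * (a₁ + (p.1 : ℝ) * e₁) ^ 2
            + d * (a₁ + (p.1 : ℝ) * e₁) + e)).card) :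
    k < 174960 := by
  -- completing the square: `(2y + ax + b)² = 4x³ + (a² + 4c)x² + (2ab + 4d)x + b² + 4e`
  set x : ℝ[X] := C e₁ * X + C a₁
  set P : ℝ[X] := C 4 * x ^ 3 + C (a ^ 2 + 4 * c) * x ^ 2 + C (2 * a * b + 4 * d) * x
    + C (b ^ 2 + 4 * e)
  have hP : P.natDegree = 3 := by
    simp only [P, x]
    compute_degree!
  obtain ⟨Z, hZ7, hZ⟩ := exists_card_le_seven_eval_ne_zero P hP
  have hbound := (Nat.mul_le_mul_left 104 h).trans <| mul_card_le_of_sq_eq_eval P Z hZ (a * e₁)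
    (2 * a₂ + a * a₁ + b) (mul_ne_zero two_ne_zero he₂) (filter_subset _ _) (fun p hp => by
      simp only [P, x, eval_add, eval_mul, eval_pow, eval_C, eval_X]
      linear_combination 4 * (mem_filter.1 hp).2) 104
  have hsq : ∑ t ∈ range 104, t ^ 2 = 369564 := by decide
  rw [hsq] at hbound
  have hZ8 : (#Z + 1) * (104 + 3 * k + 369564) ≤ 8 * (104 + 3 * k + 369564) :=
    Nat.mul_le_mul_right _ (by omega)
  omega

/-- If a real elliptic curve in Weierstrass form (nonzero discriminant) contains
at least `k` distinct points of a `k × k` grid, then `k < 174960`. -/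
theorem elliptic_curve_grid_points_lt
    (a b c d e : ℝ)
    (hΔ : (WeierstrassCurve.mk a c b d e).Δ ≠ 0)
    (k : ℕ) (hk : 0 < k)
    (a₁ a₂ e₁ e₂ : ℝ) (he₁ : e₁ ≠ 0) (he₂ : e₂ ≠ 0)
    (h : k ≤ ((Finset.range k ×ˢ Finset.range k).filter
        (fun p : ℕ × ℕ =>
          (a₂ + (p.2 : ℝ) * e₂) ^ 2
            + a * (a₁ + (p.1 : ℝ) * e₁) * (a₂ + (p.2 : ℝ) * e₂)
            + b * (a₂ + (p.2 : ℝ) * e₂)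
          = (a₁ + (p.1 : ℝ) * e₁) ^ 3 + c * (a₁ + (p.1 : ℝ) * e₁) ^ 2
            + d * (a₁ + (p.1 : ℝ) * e₁) + e)).card) :
    k < 174960 :=
  elliptic_curve_grid_points_lt_general a b c d e k a₁ a₂ e₁ e₂ he₁ he₂ h
end
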